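/- On ℝ⁵ with coordinates (x,y,z,a,b), let Z₁ = ∂x + a∂z, Z₂ = ∂y + b∂z, Z₃ = −3∂b, Z₄ = ∂a, and for u ∈ ℝ let W(u) = Z₁ + uZ₂ + u²Z₃ + u³Z₄ (the twisted-cubic field of the stringent G₂ man{oe}uvre). Define Y₁ = W(0), Y₂ = W(1), Y₃ = W(−1), Y₄ = W(2). Then: (i) the Lie bracket satisfies [Y₂, Y₁] = ∂z; (ii) at every point p ∈ ℝ⁵ the five vectors Y₁(p), Y₂(p), Y₃(p), Y₄(p), ∂z(p) form a basis of ℝ⁵. In particular the family {Y₁, Y₂, Y₃, Y₄} is bracket generating at every point of ℝ⁵. -/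

import Mathlib

noncomputable section

/-- Points of `ℝ⁵` with coordinates `(x,y,z,a,b) = (p 0, p 1, p 2, p 3, p 4)`. -/
abbrev Pt := Fin 5 → ℝ

/-- Vector fields on `ℝ⁵`. -/
abbrev VF := Pt → Pt

/-- Lie bracket of vector fields: `[V,W](p) = (DW)_p(V(p)) − (DV)_p(W(p))`. -/
def lieBracket (V W : VF) : VF := fun p => fderiv ℝ W p (V p) - fderiv ℝ V p (W p)

/-- `Z₁ = ∂x + a∂z`. -/
def Z1 : VF := fun p => ![1, 0, p 3, 0, 0]
/-- `Z₂ = ∂y + b∂z`. -/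
def Z2 : VF := fun p => ![0, 1, p 4, 0, 0]
/-- `Z₃ = −3∂b`. -/
def Z3 : VF := fun _ => ![0, 0, 0, 0, -3]
/-- `Z₄ = ∂a`. -/
def Z4 : VF := fun _ => ![0, 0, 0, 1, 0]

/-- The twisted-cubic field `W(u) = Z₁ + uZ₂ + u²Z₃ + u³Z₄` of the stringent
`G₂` man\oe uvre. -/
def Wc (u : ℝ) : VF := fun p => Z1 p + u • Z2 p + u ^ 2 • Z3 p + u ^ 3 • Z4 p

def Y1 : VF := Wc 0
def Y2 : VF := Wc 1
def Y3 : VF := Wc (-1)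
def Y4 : VF := Wc 2

/-!
Each `W(u)` is affine with constant derivative `q ↦ (q_a + u q_b) ∂z`, and `W(u)` has
`a`-component `u³` and `b`-component `-3u²`; hence `[W(u), W(v)] = (u - v)³ ∂z`.
Modulo `∂z` the rows `W(uᵢ)(p)` are `(1, uᵢ, uᵢ³, -3uᵢ²)`, so together with `∂z` their
determinant is `3` times a Vandermonde determinant, nonzero for distinct `uᵢ`.
-/

local notation "∂z" => (![0, 0, 1, 0, 0] : Pt)

def linearPartWc (u : ℝ) : Pt →L[ℝ] Pt :=
  ((ContinuousLinearMap.proj 3 : Pt →L[ℝ] ℝ) + u • ContinuousLinearMap.proj 4).smulRight ∂z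

lemma Wc_eq_const_add_linearPartWc (u : ℝ) : Wc u = fun p => Wc u 0 + linearPartWc u p := by
  funext p i
  fin_cases i <;> simp [Wc, Z1, Z2, Z3, Z4, linearPartWc]

lemma hasFDerivAt_Wc (u : ℝ) (p : Pt) : HasFDerivAt (Wc u) (linearPartWc u) p := by
  rw [Wc_eq_const_add_linearPartWc u]
  exact (linearPartWc u).hasFDerivAt.const_add _

lemma lieBracket_apply_of_hasFDerivAt {V W : VF} {A B : Pt →L[ℝ] Pt} {p : Pt}
    (hV : HasFDerivAt V A p) (hW : HasFDerivAt W B p) :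
    lieBracket V W p = B (V p) - A (W p) := by
  rw [lieBracket, hV.fderiv, hW.fderiv]

theorem lieBracket_Wc (u v : ℝ) : lieBracket (Wc u) (Wc v) = fun _ => (u - v) ^ 3 • ∂z := by
  funext p
  rw [lieBracket_apply_of_hasFDerivAt (hasFDerivAt_Wc u p) (hasFDerivAt_Wc v p)]
  ext i
  fin_cases i <;> simp [linearPartWc, Wc, Z1, Z2, Z3, Z4]
  ring

theorem det_rows_Wc_dz (p : Pt) (u₀ u₁ u₂ u₃ : ℝ) :
    (Matrix.of ![Wc u₀ p, Wc u₁ p, Wc u₂ p, Wc u₃ p, ∂z]).det =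
      3 * ((u₁ - u₀) * (u₂ - u₀) * (u₃ - u₀) * (u₂ - u₁) * (u₃ - u₁) * (u₃ - u₂)) := by
  simp [Matrix.det_succ_row_zero, Fin.sum_univ_succ, Wc, Z1, Z2, Z3, Z4, Fin.succAbove]
  ring

theorem linearIndependent_and_span_eq_top_of_det_ne_zero {K ι : Type*} [Field K] [Fintype ι]
    [DecidableEq ι] {v : ι → ι → K} (h : (Matrix.of v).det ≠ 0) :
    LinearIndependent K v ∧ Submodule.span K (Set.range v) = ⊤ :=
  (Pi.basisFun K ι).is_basis_iff_det.mpr (by rw [Pi.basisFun_det_apply]; exact h.isUnit)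

/-- The stringent `G₂`-mode control fields `Yᵢ = W(uᵢ)`, `uᵢ ∈ {0,1,−1,2}`, satisfy
`[Y₂,Y₁] = ∂z`, and at every point `Y₁,Y₂,Y₃,Y₄,∂z` form a basis of `ℝ⁵`:
the family `{Y₁,…,Y₄}` is bracket generating. -/
theorem G2_mode_bracket_generating :
    lieBracket Y2 Y1 = (fun _ => ![0, 0, 1, 0, 0]) ∧
    (∀ p : Pt,
      LinearIndependent ℝ ![Y1 p, Y2 p, Y3 p, Y4 p, ![0, 0, 1, 0, 0]] ∧
      Submodule.span ℝ
        ({Y1 p, Y2 p, Y3 p, Y4 p, ![0, 0, 1, 0, 0]} : Set (Fin 5 → ℝ)) = ⊤) := by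
  refine ⟨by simpa [Y1, Y2] using lieBracket_Wc 1 0, fun p => ?_⟩
  have hdet : (Matrix.of ![Y1 p, Y2 p, Y3 p, Y4 p, ∂z]).det ≠ 0 := by
    rw [Y1, Y2, Y3, Y4, det_rows_Wc_dz]
    norm_num
  simpa only [Matrix.range_cons, Matrix.range_empty, Set.singleton_union, Set.union_empty] using
    linearIndependent_and_span_eq_top_of_det_ne_zero hdet
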